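/- arXiv:1610.06068 — 5 statements merged into one kernel-verified Lean document; each statement's English description precedes it below -/
import Mathlib

section
/- Fix a connected graph G on n vertices with edge set L, and fix index sets R, C ⊆ N with min(|R|, |C|) ≤ n − 1. If the submatrix B_{R,C} of the weighted Laplacian has structural rank equal to min(|R|, |C|) (a property depending only on the topology of G), then for Lebesgue-almost every positive weight vector w ∈ ℝ^L, the submatrix B(w)_{R,C} has rank equal to min(|R|, |C|). -/
open Matrix

/-- The incidence vector `m_e ∈ ℝ^n` of the pair of vertices `(i, j)`:
`m_e(i) = 1`, `m_e(j) = -1`, `0` elsewhere. -/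
def incVec {n : ℕ} (i j : Fin n) : Fin n → ℝ :=
  fun a => if a = i then 1 else if a = j then -1 else 0

/-- The rank-one matrix `m_e m_eᵀ`, which is well defined on unordered pairs. -/
def edgeOuter {n : ℕ} : Sym2 (Fin n) → Matrix (Fin n) (Fin n) ℝ :=
  Sym2.lift ⟨fun i j => vecMulVec (incVec i j) (incVec i j), by
    intro i j
    ext a b
    simp only [vecMulVec_apply, incVec]
    split_ifs <;> simp_all⟩

/-- The weighted Laplacian `B = Σ_{e ∈ L} w_e · m_e m_eᵀ` of the graph `G`
with edge weights `w`. -/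
noncomputable def lap {n : ℕ} (G : SimpleGraph (Fin n)) [DecidableRel G.Adj]
    (w : Sym2 (Fin n) → ℝ) : Matrix (Fin n) (Fin n) ℝ :=
  ∑ e ∈ G.edgeFinset, w e • edgeOuter e

/-- `ΔP` is an unobservable attack w.r.t. the Laplacian `B` and measured buses `M`:
`ΔP ≠ 0`, and `ΔP = B·Δθ` for some `Δθ` vanishing on `M`. -/
def Unobservable {n : ℕ} (B : Matrix (Fin n) (Fin n) ℝ) (M : Finset (Fin n))
    (ΔP : Fin n → ℝ) : Prop :=
  ΔP ≠ 0 ∧ ∃ Δθ : Fin n → ℝ, ΔP = B.mulVec Δθ ∧ ∀ i ∈ M, Δθ i = 0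

/-- `‖v‖₀`: the number of nonzero entries of `v`. -/
noncomputable def sparsity {n : ℕ} (v : Fin n → ℝ) : ℕ := (Function.support v).ncard

/-- The open neighborhood `N(S) = {j ∉ S : j adjacent to some vertex of S}`. -/
def nbhd {n : ℕ} (G : SimpleGraph (Fin n)) [DecidableRel G.Adj] (S : Finset (Fin n)) :
    Finset (Fin n) :=
  Finset.univ.filter fun j => j ∉ S ∧ ∃ i ∈ S, G.Adj j i

/-- The closed neighborhood `N[S] = S ∪ N(S)`. -/
def closedNbhd {n : ℕ} (G : SimpleGraph (Fin n)) [DecidableRel G.Adj] (S : Finset (Fin n)) :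
    Finset (Fin n) :=
  S ∪ nbhd G S

/-- `S` is a vulnerable set: a nonempty `S ⊆ Mᶜ` such that the number of alterable
buses in `N[S]` is at least `|N(S)| + 1` (i.e. `N(S)` is a vulnerable vertex cut of
the augmented graph `G^M`). -/
def VulnerableSet {n : ℕ} (G : SimpleGraph (Fin n)) [DecidableRel G.Adj]
    (M U S : Finset (Fin n)) : Prop :=
  S.Nonempty ∧ S ⊆ Mᶜ ∧ (nbhd G S).card + 1 ≤ (Uᶜ ∩ closedNbhd G S).card

open MeasureTheory

/-- The weighted Laplacian `B(w) = Σ_{e ∈ L} w_e · m_e m_eᵀ`, with the edge weights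
given as a vector `w ∈ ℝ^L` indexed by the edge set. -/
noncomputable def lapW {n : ℕ} (G : SimpleGraph (Fin n)) [DecidableRel G.Adj]
    (w : G.edgeSet → ℝ) : Matrix (Fin n) (Fin n) ℝ :=
  ∑ e : G.edgeSet, w e • edgeOuter (e : Sym2 (Fin n))

/-- A set of independent entries of a matrix: nonzero entries no two of which lie in
the same row or the same column. -/
def IsIndepEntrySet {α β : Type*} (H : Matrix α β ℝ) (s : Finset (α × β)) : Prop :=
  (∀ p ∈ s, H p.1 p.2 ≠ 0) ∧ ∀ p ∈ s, ∀ q ∈ s, p ≠ q → p.1 ≠ q.1 ∧ p.2 ≠ q.2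

/-- The structural rank of a matrix: the maximum cardinality of a set of
independent entries. -/
noncomputable def spr {α β : Type*} [Fintype α] [Fintype β] (H : Matrix α β ℝ) : ℕ :=
  sSup {k : ℕ | ∃ s : Finset (α × β), IsIndepEntrySet H s ∧ s.card = k}


/-!
A `k × k` minor of `B(w)` is a polynomial in `w`, and the zero set of a nonzero polynomial is
Lebesgue-null, so it suffices to exhibit one weight vector at which some `k × k` minor of
`B_{R,C}` is nonzero. A maximum set of independent entries gives injective `r, c` with each
`r i = c i` (a loop) or `r i ~ c i` (an arc `r i → c i`). After turning every cycle of arcs into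
loops, the arcs form disjoint paths. Give each arc its own edge and each loop the first edge of a
shortest path to a vertex `z` outside the rows (which exists as `k < n`). With these `k` edges
as weights, `B_{r,c} = M_r M_cᵀ` for their incidence matrix `M`, and both factors are
triangular for suitable orderings of the indices (along the paths, and by distance to `z`),
hence invertible.
-/

namespace MvPolynomial

theorem volume_zeroSet_fin_eq_zero :
    ∀ {m : ℕ} {p : MvPolynomial (Fin m) ℝ}, p ≠ 0 → volume {x | eval x p = 0} = 0
  | 0, p, hp => by
    obtain ⟨a, rfl⟩ := C_surjective (Fin 0) p
    simp_all
  | m + 1, p, hp => by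
    set q := finSuccEquiv ℝ m p
    obtain ⟨i, hi⟩ : ∃ i, q.coeff i ≠ 0 := by
      by_contra! h
      exact hp <| (finSuccEquiv ℝ m).injective <| by rw [map_zero]; exact Polynomial.ext h
    have hmeas : MeasurableSet {x : Fin (m + 1) → ℝ | eval x p = 0} :=
      (isClosed_eq p.continuous_eval continuous_const).measurableSet
    rw [volume_pi,
      ← (measurePreserving_piFinSuccAbove (fun _ ↦ volume) 0).symm.measure_preimage_equiv,
      Measure.prod_apply_symm (hmeas.preimage (MeasurableEquiv.measurable _))]
    refine lintegral_eq_zero_of_ae_eq_zero ?_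
    -- Fubini: for almost every `s`, the `i`-th coefficient survives at `s`, so the slice
    -- `{y | p (y, s) = 0}` is the finite root set of a nonzero univariate polynomial.
    filter_upwards [measure_eq_zero_iff_ae_notMem.mp (volume_zeroSet_fin_eq_zero hi)] with s hs
    have hqs : q.map (eval s) ≠ 0 := fun h ↦ hs <| by
      simpa [Polynomial.coeff_map] using congrArg (Polynomial.coeff · i) h
    refine measure_mono_null (fun y hy ↦ ?_)
      ((Polynomial.finite_setOfPred_isRoot hqs).measure_zero _)
    simp only [Set.mem_preimage, Set.mem_ofPred_eq, MeasurableEquiv.piFinSuccAbove_symm_apply] at hy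
    rwa [show Fin.insertNthEquiv (fun _ ↦ ℝ) 0 (y, s) = Fin.cons y s from Fin.insertNth_zero' y s,
      eval_eq_eval_mv_eval'] at hy

theorem volume_zeroSet_eq_zero {σ : Type*} [Fintype σ] {p : MvPolynomial σ ℝ} (hp : p ≠ 0) :
    volume {x | eval x p = 0} = 0 := by
  let e := Fintype.equivFin σ
  have hp' : rename e p ≠ 0 := by
    rwa [Ne, ← map_zero (rename e), (rename_injective _ e.injective).eq_iff]
  have hφ := volume_preserving_arrowCongr' e (MeasurableEquiv.refl ℝ) (.id volume)
  convert (hφ.measure_preimage_equiv _).trans (volume_zeroSet_fin_eq_zero hp') using 2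
  ext x
  change _ ↔ eval (x ∘ e.symm) (rename e p) = 0
  simp [eval_rename, Function.comp_assoc]

end MvPolynomial

theorem Matrix.det_ne_zero_of_rank {ι K α : Type*} [Fintype ι] [DecidableEq ι] [CommRing K]
    [IsDomain K] [LinearOrder α] (A : Matrix ι ι K) (h : ι → α) (hdiag : ∀ i, A i i ≠ 0)
    (hrank : ∀ i j, i ≠ j → A i j ≠ 0 → h i < h j) : A.det ≠ 0 := by
  have hA : A.BlockTriangular h := fun i j hji ↦ by
    by_contra hij
    exact (hrank i j (by rintro rfl; exact hji.false) hij).asymm hji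
  -- off-diagonal entries within a level set of `h` vanish, so every diagonal block is diagonal
  have hblock (a : α) : A.toSquareBlock h a = diagonal fun i : {i // h i = a} ↦ A i i := by
    ext ⟨i, hi⟩ ⟨j, hj⟩
    by_cases hij : i = j
    · subst hij; simp [toSquareBlock_def]
    · simpa [toSquareBlock_def, hij] using fun hne ↦ (hrank i j hij hne).ne (hi.trans hj.symm)
  classical
  rw [hA.det, Finset.prod_ne_zero_iff]
  intro a _
  rw [hblock, det_diagonal, Finset.prod_ne_zero_iff]
  exact fun i _ ↦ hdiag i

theorem SimpleGraph.Connected.exists_adj_dist_lt {V : Type*} {G : SimpleGraph V}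
    (hG : G.Connected) {v z : V} (hne : v ≠ z) : ∃ y, G.Adj v y ∧ G.dist y z < G.dist v z := by
  obtain ⟨p, hp⟩ := hG.exists_walk_length_eq_dist v z
  cases p with
  | nil => exact absurd rfl hne
  | cons hadj p =>
    refine ⟨_, hadj, ?_⟩
    have := SimpleGraph.dist_le p
    rw [SimpleGraph.Walk.length_cons] at hp
    omega

open Finset Relation in
theorem Relation.exists_rank_of_acyclic {ι : Type*} [Finite ι] {ρ : ι → ι → Prop}
    (hρ : ∀ i, ¬TransGen ρ i i) : ∃ h : ι → ℕ, ∀ ⦃i j⦄, ρ i j → h i < h j := by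
  classical
  have := Fintype.ofFinite ι
  refine ⟨fun i ↦ #{x | TransGen ρ x i}, fun i j hij ↦ card_lt_card ?_⟩
  refine (ssubset_iff_of_subset fun x hx ↦ ?_).mpr ⟨i, ?_, ?_⟩
  · simp only [mem_filter, mem_univ, true_and] at hx ⊢
    exact hx.tail hij
  · simpa using TransGen.single hij
  · simpa using hρ i

section Matching

open Function Relation

variable {ι V : Type*} (r c : ι → V)

/-- Reading each index `i` as the arc `r i → c i`: arc `j` starts where arc `i` ends. -/
def ArcSucc (i j : ι) : Prop := i ≠ j ∧ c i = r j

theorem arcSucc_swap : ArcSucc c r = flip (ArcSucc r c) := by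
  ext i j
  simp only [ArcSucc, flip, ne_comm, eq_comm]

variable {r c}

theorem exists_acyclic_rematch (hr : Injective r) (hc : Injective c) :
    ∃ c' : ι → V, Injective c' ∧ (∀ i, c' i = r i ∨ c' i = c i) ∧
      Set.range c' ⊆ Set.range c ∧ ∀ i, ¬TransGen (ArcSucc r c') i i := by
  classical
  let onCycle i := TransGen (ArcSucc r c) i i
  have pred (i : ι) (hi : onCycle i) : ∃ x, ArcSucc r c x i ∧ onCycle x := by
    obtain ⟨x, hix, hxi⟩ := TransGen.tail'_iff.mp hi
    exact ⟨x, hxi, TransGen.head' hxi hix⟩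
  -- close every cycle of arcs up into loops
  refine ⟨fun i ↦ if onCycle i then r i else c i, ?_, fun i ↦ ?_, ?_, ?_⟩
  · intro u v huv
    by_cases hu : onCycle u <;> by_cases hv : onCycle v <;>
      simp only [hu, hv, if_true, if_false] at huv
    · exact hr huv
    · obtain ⟨x, hxu, hx⟩ := pred u hu
      exact absurd (hc (hxu.2.trans huv) ▸ hx) hv
    · obtain ⟨x, hxv, hx⟩ := pred v hv
      exact absurd (hc (hxv.2.trans huv.symm) ▸ hx) hu
    · exact hc huv
  · by_cases hi : onCycle i <;> simp [hi]
  · rintro _ ⟨i, rfl⟩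
    by_cases hi : onCycle i
    · obtain ⟨x, hx, -⟩ := pred i hi
      exact ⟨x, by simp [hi, hx.2]⟩
    · exact ⟨i, by simp [hi]⟩
  · have hstep (i j : ι) (h : ArcSucc r (fun i ↦ if onCycle i then r i else c i) i j) :
        ¬onCycle i ∧ ArcSucc r c i j := by
      by_cases hi : onCycle i
      · simp only [ArcSucc, hi, if_true] at h
        exact absurd (hr h.2) h.1
      · simp only [ArcSucc, hi, if_false] at h
        exact ⟨hi, h⟩
    intro i hcyc
    obtain ⟨j, hij, -⟩ := TransGen.head'_iff.mp hcyc
    exact (hstep i j hij).1 (TransGen.mono (fun a b h ↦ (hstep a b h).2) _ _ hcyc)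

variable [DecidableEq V] (r c)

/-- The second endpoint of the edge assigned to index `i`, whose first endpoint is `r i`. -/
def edgeEnd (y : V → V) (i : ι) : V := if r i = c i then y (r i) else c i

theorem mk_edgeEnd_comm (y : V → V) (i : ι) :
    s(r i, edgeEnd r c y i) = s(c i, edgeEnd c r y i) := by
  unfold edgeEnd
  by_cases h : r i = c i
  · simp [h]
  · simp [h, Ne.symm h, Sym2.eq_swap]

variable {r c}

theorem exists_rank_mem_edgeEnd [Finite ι] (hr : Injective r) (hc : Injective c)
    (hacyc : ∀ i, ¬TransGen (ArcSucc r c) i i) (φ : V → ℕ) (y : V → V)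
    (hy : ∀ i, r i = c i → φ (y (r i)) < φ (r i)) :
    ∃ h : ι → ℕ ×ₗ ℕ, ∀ i t, i ≠ t → r i ∈ s(r t, edgeEnd r c y t) → h i < h t := by
  classical
  obtain ⟨hs, hhs⟩ := exists_rank_of_acyclic (ρ := flip (ArcSucc r c))
    fun i h ↦ hacyc i (transGen_swap.mp h)
  refine ⟨fun t ↦ if r t = c t then toLex (1, φ (r t)) else toLex (0, hs t), ?_⟩
  intro i t hit hmem
  rcases Sym2.mem_iff.mp hmem with h | h
  · exact absurd (hr h) hit
  unfold edgeEnd at h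
  by_cases ht : r t = c t
  · rw [if_pos ht] at h
    by_cases hi : r i = c i
    · simp only [if_pos hi, if_pos ht]
      exact Prod.Lex.right _ (h ▸ hy t ht)
    · simp only [if_neg hi, if_pos ht]
      exact Prod.Lex.left _ _ zero_lt_one
  · rw [if_neg ht] at h
    have hi : r i ≠ c i := fun hi ↦ hit (hc (hi.symm.trans h))
    simp only [if_neg hi, if_neg ht]
    exact Prod.Lex.right _ (hhs ⟨hit.symm, h.symm⟩)

end Matching

section Laplacian

open Finset Function Relation

variable {n : ℕ}

theorem edgeOuter_mk (x y : Fin n) : edgeOuter s(x, y) = vecMulVec (incVec x y) (incVec x y) :=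
  rfl

theorem incVec_ne_zero_iff {x y p : Fin n} (hxy : x ≠ y) : incVec x y p ≠ 0 ↔ p ∈ s(x, y) := by
  unfold incVec
  split_ifs <;> simp_all [Ne.symm hxy]

theorem eq_or_adj_of_lap_apply_ne_zero {G : SimpleGraph (Fin n)} [DecidableRel G.Adj]
    {w : Sym2 (Fin n) → ℝ} {p q : Fin n} (h : lap G w p q ≠ 0) : p = q ∨ G.Adj p q := by
  rw [lap, Matrix.sum_apply] at h
  obtain ⟨e, he, hne⟩ := Finset.exists_ne_zero_of_sum_ne_zero h
  induction e with | _ x y =>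
  rw [SimpleGraph.mem_edgeFinset, SimpleGraph.mem_edgeSet] at he
  simp only [Matrix.smul_apply, edgeOuter_mk, vecMulVec_apply, smul_eq_mul] at hne
  have hp := (incVec_ne_zero_iff he.ne).mp (left_ne_zero_of_mul (right_ne_zero_of_mul hne))
  have hq := (incVec_ne_zero_iff he.ne).mp (right_ne_zero_of_mul (right_ne_zero_of_mul hne))
  rcases Sym2.mem_iff.mp hp with rfl | rfl <;> rcases Sym2.mem_iff.mp hq with rfl | rfl <;>
    simp [he, he.symm]

theorem det_incVec_ne_zero {ι α : Type*} [Fintype ι] [DecidableEq ι] [LinearOrder α]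
    {f a b : ι → Fin n} (hab : ∀ t, a t ≠ b t) (hdiag : ∀ t, f t ∈ s(a t, b t)) (h : ι → α)
    (hrank : ∀ i t, i ≠ t → f i ∈ s(a t, b t) → h i < h t) :
    (of fun i t ↦ incVec (a t) (b t) (f i)).det ≠ 0 :=
  det_ne_zero_of_rank _ h (fun t ↦ (incVec_ne_zero_iff (hab t)).mpr (hdiag t))
    fun i t hit hne ↦ hrank i t hit ((incVec_ne_zero_iff (hab t)).mp hne)

theorem det_submatrix_sum_edgeOuter {ι : Type*} [Fintype ι] [DecidableEq ι]
    (a b f g : ι → Fin n) :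
    ((∑ t, edgeOuter s(a t, b t)).submatrix f g).det =
      (of fun i t ↦ incVec (a t) (b t) (f i)).det *
        (of fun j t ↦ incVec (a t) (b t) (g j)).det := by
  rw [← det_transpose (of fun j t ↦ incVec (a t) (b t) (g j)), ← det_mul]
  congr 1
  ext i j
  simp [mul_apply, Matrix.sum_apply, edgeOuter_mk, vecMulVec_apply]

variable (G : SimpleGraph (Fin n)) [DecidableRel G.Adj]

theorem lapW_card_fiber {ι : Type*} [Fintype ι] (E : ι → G.edgeSet) :
    lapW G (fun e ↦ #{t | E t = e}) = ∑ t, edgeOuter (E t : Sym2 (Fin n)) := by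
  rw [lapW, ← Finset.sum_fiberwise' Finset.univ E fun e ↦ edgeOuter (e : Sym2 (Fin n))]
  simp only [Finset.sum_const, Nat.cast_smul_eq_nsmul]

noncomputable def lapPoly : Matrix (Fin n) (Fin n) (MvPolynomial G.edgeSet ℝ) :=
  ∑ e : G.edgeSet, MvPolynomial.X (R := ℝ) e • (edgeOuter (e : Sym2 (Fin n))).map MvPolynomial.C

theorem lapPoly_map_eval (w : G.edgeSet → ℝ) :
    (lapPoly G).map (MvPolynomial.eval w) = lapW G w := by
  ext i j
  simp [lapPoly, lapW, Matrix.sum_apply]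

variable {G} in
theorem volume_det_submatrix_lapW_eq_zero {ι : Type*} [Fintype ι] [DecidableEq ι]
    {f g : ι → Fin n} {w₀ : G.edgeSet → ℝ}
    (h : ((lapW G w₀).submatrix f g).det ≠ 0) :
    volume {w | ((lapW G w).submatrix f g).det = 0} = 0 := by
  have heval (w : G.edgeSet → ℝ) : MvPolynomial.eval w ((lapPoly G).submatrix f g).det =
      ((lapW G w).submatrix f g).det := by
    rw [RingHom.map_det, RingHom.mapMatrix_apply, ← submatrix_map, lapPoly_map_eval]
  simp_rw [← heval] at h ⊢
  exact MvPolynomial.volume_zeroSet_eq_zero fun hP ↦ h (by rw [hP, map_zero])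

end Laplacian

section Certificate

open Finset Function Relation

variable {n : ℕ} {G : SimpleGraph (Fin n)} [DecidableRel G.Adj] {ι : Type*} [Fintype ι]
  [DecidableEq ι]

theorem exists_det_submatrix_lapW_ne_zero_of_acyclic (hG : G.Connected) {r c : ι → Fin n}
    (hr : Injective r) (hc : Injective c) (hrc : ∀ i, r i = c i ∨ G.Adj (r i) (c i))
    (hacyc : ∀ i, ¬TransGen (ArcSucc r c) i i) {z : Fin n} (hz : ∀ i, r i ≠ z) :
    ∃ w, ((lapW G w).submatrix r c).det ≠ 0 := by
  -- loops are matched with the first edge of a shortest path to `z`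
  have (v : Fin n) : ∃ y, v ≠ z → G.Adj v y ∧ G.dist y z < G.dist v z := by
    by_cases hv : v = z
    · exact ⟨v, absurd hv⟩
    · obtain ⟨y, hy⟩ := hG.exists_adj_dist_lt hv
      exact ⟨y, fun _ ↦ hy⟩
  choose y hy using this
  have hadj (t : ι) : G.Adj (r t) (edgeEnd r c y t) := by
    unfold edgeEnd
    split_ifs with h
    · exact (hy _ (hz t)).1
    · exact (hrc t).resolve_left h
  obtain ⟨hR, hRrank⟩ := exists_rank_mem_edgeEnd hr hc hacyc (G.dist · z) y
    fun t _ ↦ (hy _ (hz t)).2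
  obtain ⟨hC, hCrank⟩ := exists_rank_mem_edgeEnd hc hr
    (by rw [arcSucc_swap]; exact fun i h ↦ hacyc i (transGen_swap.mp h)) (G.dist · z) y
    fun t ht ↦ ht ▸ (hy _ (hz t)).2
  -- weighting each edge by how often it is chosen makes `lapW` the sum over the indices,
  -- without first proving the chosen edges distinct
  refine ⟨fun e ↦ #{t | (⟨s(r t, edgeEnd r c y t), hadj t⟩ : G.edgeSet) = e}, ?_⟩
  rw [lapW_card_fiber, det_submatrix_sum_edgeOuter]
  refine mul_ne_zero (det_incVec_ne_zero (fun t ↦ (hadj t).ne) (fun t ↦ Sym2.mem_mk_left _ _)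
    hR hRrank) (det_incVec_ne_zero (fun t ↦ (hadj t).ne) (fun t ↦ ?_) hC fun j t hjt h ↦ ?_)
  · rw [mk_edgeEnd_comm]
    exact Sym2.mem_mk_left _ _
  · rw [mk_edgeEnd_comm] at h
    exact hCrank j t hjt h

theorem exists_det_submatrix_lapW_ne_zero (hG : G.Connected) {r c : ι → Fin n}
    (hr : Injective r) (hc : Injective c) (hrc : ∀ i, r i = c i ∨ G.Adj (r i) (c i))
    (hcard : Fintype.card ι < n) :
    ∃ c' : ι → Fin n, Set.range c' ⊆ Set.range c ∧ ∃ w, ((lapW G w).submatrix r c').det ≠ 0 := by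
  obtain ⟨c', hc', hc'rc, hrange, hacyc⟩ := exists_acyclic_rematch hr hc
  obtain ⟨z, hz⟩ : ∃ z, z ∉ Set.range r := by
    by_contra! h
    simpa using (Fintype.card_le_of_surjective r h).trans_lt hcard
  refine ⟨c', hrange, exists_det_submatrix_lapW_ne_zero_of_acyclic hG hr hc' (fun i ↦ ?_) hacyc
    fun i hi ↦ hz ⟨i, hi⟩⟩
  rcases hc'rc i with h | h <;> rw [h]
  · exact .inl rfl
  · exact hrc i

end Certificate

theorem exists_isIndepEntrySet_card_eq_spr {α β : Type*} [Fintype α] [Fintype β]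
    (H : Matrix α β ℝ) : ∃ s, IsIndepEntrySet H s ∧ s.card = spr H :=
  Nat.sSup_mem (s := {k | ∃ s, IsIndepEntrySet H s ∧ s.card = k})
    ⟨0, ∅, by simp [IsIndepEntrySet], rfl⟩
    ⟨Fintype.card (α × β), by rintro _ ⟨s, -, rfl⟩; exact s.card_le_univ⟩

theorem IsIndepEntrySet.exists_injective {α β : Type*} {H : Matrix α β ℝ} {s : Finset (α × β)}
    (hs : IsIndepEntrySet H s) : ∃ (r : Fin s.card → α) (c : Fin s.card → β),
      Function.Injective r ∧ Function.Injective c ∧ ∀ i, H (r i) (c i) ≠ 0 := by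
  let e := s.equivFin.symm
  have hne (i j : Fin s.card) (hij : i ≠ j) : (e i).1.1 ≠ (e j).1.1 ∧ (e i).1.2 ≠ (e j).1.2 :=
    hs.2 _ (e i).2 _ (e j).2 (Subtype.val_injective.ne (e.injective.ne hij))
  exact ⟨fun i ↦ (e i).1.1, fun i ↦ (e i).1.2, fun i j h ↦ by_contra fun hij ↦ (hne i j hij).1 h,
    fun i j h ↦ by_contra fun hij ↦ (hne i j hij).2 h, fun i ↦ hs.1 _ (e i).2⟩

theorem Matrix.card_le_rank_of_det_submatrix_ne_zero {m l ι K : Type*} [Fintype l] [Fintype ι]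
    [DecidableEq ι] [Field K] (A : Matrix m l K) {f : ι → m} {g : ι → l}
    (h : (A.submatrix f g).det ≠ 0) : Fintype.card ι ≤ A.rank := by
  rw [← rank_of_isUnit _ ((isUnit_iff_isUnit_det _).mpr h.isUnit)]
  exact rank_submatrix_le A f g

theorem rank_eq_structuralRank_ae_general {n : ℕ}
    (G : SimpleGraph (Fin n)) [DecidableRel G.Adj] (hG : G.Connected)
    (R C : Finset (Fin n)) (hmin : min R.card C.card ≤ n - 1)
    (hspr : spr ((lap G fun _ => 1).submatrix (fun i : (R : Finset (Fin n)) => (i : Fin n))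
        (fun j : (C : Finset (Fin n)) => (j : Fin n))) = min R.card C.card) :
    MeasureTheory.volume {w : G.edgeSet → ℝ | (∀ e, 0 < w e) ∧
      ((lapW G w).submatrix (fun i : (R : Finset (Fin n)) => (i : Fin n))
        (fun j : (C : Finset (Fin n)) => (j : Fin n))).rank ≠ min R.card C.card} = 0 := by
  obtain ⟨s, hs, hcard⟩ := exists_isIndepEntrySet_card_eq_spr ((lap G fun _ ↦ 1).submatrix
    (fun i : (R : Finset (Fin n)) ↦ (i : Fin n)) (fun j : (C : Finset (Fin n)) ↦ (j : Fin n)))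
  rw [hspr] at hcard
  obtain ⟨r, c, hr, hc, hrc⟩ := hs.exists_injective
  have hn : 0 < n := Fin.pos_iff_nonempty.mpr hG.nonempty
  obtain ⟨c', hc'c, w₀, hw₀⟩ := exists_det_submatrix_lapW_ne_zero hG
    (Subtype.val_injective.comp hr) (Subtype.val_injective.comp hc)
    (fun i ↦ eq_or_adj_of_lap_apply_ne_zero (by exact hrc i))
    (by simp only [Fintype.card_fin]; omega)
  have hc'C (i : Fin s.card) : c' i ∈ C := by
    obtain ⟨j, hj⟩ := hc'c ⟨i, rfl⟩
    exact hj ▸ (c j).2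
  refine measure_mono_null (fun w hw ↦ ?_) (volume_det_submatrix_lapW_eq_zero hw₀)
  change _ = 0
  by_contra hdet
  refine hw.2 (le_antisymm (le_min ?_ ?_) ?_)
  · exact (rank_le_card_height _).trans (Fintype.card_coe R).le
  · exact (rank_le_card_width _).trans (Fintype.card_coe C).le
  · simpa [hcard] using card_le_rank_of_det_submatrix_ne_zero _ (f := r)
      (g := fun i ↦ ⟨c' i, hc'C i⟩) hdet

/-- Fix a connected graph `G` on `n ≥ 2` vertices and index sets
`R, C` with `min(|R|,|C|) ≤ n - 1`.  If the submatrix `B_{R,C}` of the Laplacian has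
structural rank `min(|R|,|C|)` (a property of the topology alone, here expressed via
the all-ones weights), then for Lebesgue-almost every positive weight vector
`w ∈ ℝ^L` the submatrix `B(w)_{R,C}` has rank `min(|R|,|C|)`. -/
theorem rank_eq_structuralRank_ae {n : ℕ} (hn : 2 ≤ n)
    (G : SimpleGraph (Fin n)) [DecidableRel G.Adj] (hG : G.Connected)
    (R C : Finset (Fin n)) (hmin : min R.card C.card ≤ n - 1)
    (hspr : spr ((lap G fun _ => 1).submatrix (fun i : (R : Finset (Fin n)) => (i : Fin n))
        (fun j : (C : Finset (Fin n)) => (j : Fin n))) = min R.card C.card) :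
    MeasureTheory.volume {w : G.edgeSet → ℝ | (∀ e, 0 < w e) ∧
      ((lapW G w).submatrix (fun i : (R : Finset (Fin n)) => (i : Fin n))
        (fun j : (C : Finset (Fin n)) => (j : Fin n))).rank ≠ min R.card C.card} = 0 :=
  rank_eq_structuralRank_ae_general G hG R C hmin hspr
end

section
/- Let G be connected with weighted Laplacian B, let M ⊆ N be a nonempty set of measured buses, and let A ⊆ N. Then there exists an unobservable attack ΔP (i.e., ΔP ≠ 0 and ΔP = B·Δθ for some Δθ with Δθ_i = 0 for all i ∈ M) satisfying ΔP_i = 0 for all i ∈ A^c if and only if the submatrix B_{A^c, M^c} has rank strictly less than |M^c|, i.e., it is column rank deficient. -/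
open Matrix

/-!
If `Δθ` vanishes on `M`, it is the extension by zero of its restriction `x` to `Mᶜ`, and
`(B Δθ)_i = (B_{Aᶜ, Mᶜ} x)_i` for `i ∈ Aᶜ`. So attacks vanishing on `Aᶜ` come from kernel vectors of
`B_{Aᶜ, Mᶜ}`, and a nonzero `x` gives a nonzero attack because `B` is injective on vectors vanishing
on `M`: `θᵀ B θ = ∑ w_e (θ_i - θ_j)²` with positive weights forces a kernel vector of `B` to be
constant along edges, hence constant on the connected graph, hence zero once it vanishes somewhere.
-/

theorem Matrix.rank_lt_card_width_iff {m n K : Type*} [Fintype n] [Field K] (A : Matrix m n K) :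
    A.rank < Fintype.card n ↔ ∃ x, x ≠ 0 ∧ A *ᵥ x = 0 := by
  have h := LinearMap.finrank_range_add_finrank_ker A.mulVecLin
  rw [Module.finrank_fintype_fun_eq_card] at h
  have hker : A.rank < Fintype.card n ↔ LinearMap.ker A.mulVecLin ≠ ⊥ := by
    rw [rank, Ne, ← Submodule.finrank_eq_zero]
    omega
  rw [hker, Ne, ker_mulVecLin_eq_bot_iff]
  push Not
  simp only [and_comm]

section ExtendByZero

variable {ι R : Type*}

theorem Function.extend_val_restrict_eq_self [Zero R] {p : ι → Prop} {θ : ι → R}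
    (h : ∀ i, ¬p i → θ i = 0) : Subtype.val.extend (fun j : Subtype p => θ j) 0 = θ := by
  funext i
  by_cases hi : p i
  · exact Function.extend_val_apply hi
  · rw [Function.extend_val_apply' hi, h i hi, Pi.zero_apply]

theorem Matrix.submatrix_val_mulVec [Fintype ι] [CommSemiring R] {m r : Type*} {S : Finset ι}
    (B : Matrix m ι R) (f : r → m) (x : S → R) :
    B.submatrix f Subtype.val *ᵥ x = (B *ᵥ Subtype.val.extend x 0) ∘ f := by
  funext k
  rw [Function.comp_apply, mulVec, mulVec, dotProduct, dotProduct,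
    ← Finset.sum_subset S.subset_univ fun j _ hj => by
      rw [Function.extend_val_apply' (p := (· ∈ S)) hj, Pi.zero_apply, mul_zero],
    ← Finset.sum_coe_sort S]
  refine Finset.sum_congr rfl fun j _ => ?_
  rw [submatrix_apply, Function.extend_val_apply (p := (· ∈ S)) j.2]

end ExtendByZero

theorem SimpleGraph.Reachable.eq_of_forall_adj {V α : Type*} {G : SimpleGraph V} {f : V → α}
    (hf : ∀ i j, G.Adj i j → f i = f j) {i j : V} (h : G.Reachable i j) : f i = f j := by
  obtain ⟨p⟩ := h
  induction p with
  | nil => rfl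
  | cons hadj _ ih => exact (hf _ _ hadj).trans ih

section Laplacian

variable {n : ℕ} {G : SimpleGraph (Fin n)} [DecidableRel G.Adj] {w : Sym2 (Fin n) → ℝ}

theorem incVec_dotProduct {i j : Fin n} (hij : i ≠ j) (θ : Fin n → ℝ) :
    incVec i j ⬝ᵥ θ = θ i - θ j := by
  simp [incVec, dotProduct, ite_mul, Finset.sum_ite, Finset.filter_eq', Finset.filter_ne', hij.symm,
    sub_eq_add_neg]

theorem dotProduct_edgeOuter_mulVec (i j : Fin n) (θ : Fin n → ℝ) :
    θ ⬝ᵥ edgeOuter s(i, j) *ᵥ θ = (incVec i j ⬝ᵥ θ) ^ 2 := by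
  rw [edgeOuter, Sym2.lift_mk, vecMulVec_mulVec, dotProduct_comm]
  simp [sq]

theorem dotProduct_lap_mulVec (θ : Fin n → ℝ) :
    θ ⬝ᵥ lap G w *ᵥ θ = ∑ e ∈ G.edgeFinset, w e * (θ ⬝ᵥ edgeOuter e *ᵥ θ) := by
  simp only [lap, sum_mulVec, dotProduct_sum, smul_mulVec, dotProduct_smul, smul_eq_mul]

theorem eq_of_adj_of_lap_mulVec_eq_zero (hw : ∀ e ∈ G.edgeSet, 0 < w e) {θ : Fin n → ℝ}
    (h0 : lap G w *ᵥ θ = 0) {i j : Fin n} (hij : G.Adj i j) : θ i = θ j := by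
  have hterm_nonneg : ∀ e ∈ G.edgeFinset, 0 ≤ w e * (θ ⬝ᵥ edgeOuter e *ᵥ θ) := by
    intro e he
    induction e using Sym2.ind with
    | _ a b =>
      rw [dotProduct_edgeOuter_mulVec]
      exact mul_nonneg (hw _ (G.mem_edgeFinset.1 he)).le (sq_nonneg _)
  have hsum : ∑ e ∈ G.edgeFinset, w e * (θ ⬝ᵥ edgeOuter e *ᵥ θ) = 0 := by
    rw [← dotProduct_lap_mulVec, h0, dotProduct_zero]
  have hterm := (Finset.sum_eq_zero_iff_of_nonneg hterm_nonneg).1 hsum s(i, j)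
    (G.mem_edgeFinset.2 hij)
  rw [dotProduct_edgeOuter_mulVec, incVec_dotProduct hij.ne] at hterm
  simpa [(hw s(i, j) hij).ne', sub_eq_zero] using hterm

theorem eq_zero_of_lap_mulVec_eq_zero (hG : G.Connected) (hw : ∀ e ∈ G.edgeSet, 0 < w e)
    {M : Finset (Fin n)} (hM : M.Nonempty) {θ : Fin n → ℝ} (hθM : ∀ i ∈ M, θ i = 0)
    (h0 : lap G w *ᵥ θ = 0) : θ = 0 := by
  obtain ⟨m, hm⟩ := hM
  funext i
  rw [(hG.preconnected i m).eq_of_forall_adj fun _ _ => eq_of_adj_of_lap_mulVec_eq_zero hw h0,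
    hθM m hm, Pi.zero_apply]

end Laplacian

theorem exists_unobservable_vanishing_on_compl_iff {n : ℕ} (B : Matrix (Fin n) (Fin n) ℝ)
    (M A : Finset (Fin n)) (hB : ∀ θ : Fin n → ℝ, (∀ i ∈ M, θ i = 0) → B *ᵥ θ = 0 → θ = 0) :
    (∃ ΔP : Fin n → ℝ, Unobservable B M ΔP ∧ ∀ i ∈ Aᶜ, ΔP i = 0) ↔
      ∃ x, x ≠ 0 ∧ B.submatrix (fun i : (Aᶜ : Finset (Fin n)) => (i : Fin n))
          (fun j : (Mᶜ : Finset (Fin n)) => (j : Fin n)) *ᵥ x = 0 := by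
  constructor
  · rintro ⟨ΔP, ⟨hP, θ, rfl, hθM⟩, hPA⟩
    have hθ : Subtype.val.extend (fun j : (Mᶜ : Finset (Fin n)) => θ j) 0 = θ :=
      Function.extend_val_restrict_eq_self fun i hi => hθM i (by simpa using hi)
    refine ⟨fun j => θ j, fun hx => hP ?_, ?_⟩
    · have hzero : Subtype.val.extend (0 : (Mᶜ : Finset (Fin n)) → ℝ) 0 = 0 :=
        Function.extend_const _ 0
      rw [← hθ, hx, hzero, mulVec_zero]
    · rw [submatrix_val_mulVec, hθ]
      funext i
      exact hPA i i.2
  · rintro ⟨x, hx, hBx⟩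
    have hθM : ∀ i ∈ M, Subtype.val.extend x 0 i = 0 := fun i hi =>
      Function.extend_val_apply' (by simpa using hi)
    refine ⟨B *ᵥ Subtype.val.extend x 0, ⟨fun h0 => hx ?_, _, rfl, hθM⟩, fun i hi => ?_⟩
    · rw [← Function.extend_comp Subtype.val_injective x 0, hB _ hθM h0]
      rfl
    · rw [submatrix_val_mulVec] at hBx
      exact congrFun hBx ⟨i, hi⟩

theorem unobservable_attack_exists_iff_rank_deficient_general {n : ℕ}
    (G : SimpleGraph (Fin n)) [DecidableRel G.Adj] (hG : G.Connected)
    (w : Sym2 (Fin n) → ℝ) (hw : ∀ e ∈ G.edgeSet, 0 < w e)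
    (M A : Finset (Fin n)) (hM : M.Nonempty) :
    (∃ ΔP : Fin n → ℝ, Unobservable (lap G w) M ΔP ∧ ∀ i ∈ Aᶜ, ΔP i = 0) ↔
      ((lap G w).submatrix (fun i : (Aᶜ : Finset (Fin n)) => (i : Fin n))
          (fun j : (Mᶜ : Finset (Fin n)) => (j : Fin n))).rank < (Mᶜ).card := by
  rw [← Fintype.card_coe, Matrix.rank_lt_card_width_iff]
  exact exists_unobservable_vanishing_on_compl_iff _ M A fun _ hθM h0 =>
    eq_zero_of_lap_mulVec_eq_zero hG hw hM hθM h0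

/-- There exists an unobservable attack `ΔP` vanishing on `Aᶜ`
iff the submatrix `B_{Aᶜ, Mᶜ}` of the weighted Laplacian is column rank deficient,
i.e. has rank strictly less than `|Mᶜ|`. -/
theorem unobservable_attack_exists_iff_rank_deficient {n : ℕ} (hn : 2 ≤ n)
    (G : SimpleGraph (Fin n)) [DecidableRel G.Adj] (hG : G.Connected)
    (w : Sym2 (Fin n) → ℝ) (hw : ∀ e ∈ G.edgeSet, 0 < w e)
    (M A : Finset (Fin n)) (hM : M.Nonempty) :
    (∃ ΔP : Fin n → ℝ, Unobservable (lap G w) M ΔP ∧ ∀ i ∈ Aᶜ, ΔP i = 0) ↔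
      ((lap G w).submatrix (fun i : (Aᶜ : Finset (Fin n)) => (i : Fin n))
          (fun j : (Mᶜ : Finset (Fin n)) => (j : Fin n))).rank < (Mᶜ).card :=
  unobservable_attack_exists_iff_rank_deficient_general G hG w hw M A hM
end

section
/- Let H ∈ ℝ^{N×N} satisfy: (a) H_{1,1} ≠ 0; (b) H_{i,i−1} ≠ 0 for all i = 2,…,N; and (c) for every i = 2,…,N, the sub-column (H_{1,i}, H_{2,i}, …, H_{i,i}) has at least one nonzero entry. Then for every n = 1,…,N and every choice of n rows of H, the n×N submatrix formed by those rows has at least n columns each containing at least one nonzero entry. -/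
lemma succ_sub_one' (N : ℕ) (j : Fin N) : (j.succ : Fin (N+1)) - 1 = j.castSucc := by
  rw [← Fin.coeSucc_eq_succ, add_sub_cancel_right]

/-- Let `H` be a real square matrix of size `N + 1` (indexed from `0`)
such that (a) `H 0 0 ≠ 0`; (b) the entry just below the diagonal is nonzero in every
row `r ≠ 0`, i.e. `H r (r-1) ≠ 0` (written via `Fin.succ`/`Fin.castSucc`); and
(c) for every column `c ≠ 0`, the sub-column `(H 0 c, …, H c c)` has at least one
nonzero entry.  Then for every choice `s` of rows of `H`, the submatrix formed by
those rows has at least `|s|` columns each containing at least one nonzero entry. -/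
theorem column_cover_of_subdiagonal (N : ℕ) (H : Matrix (Fin (N + 1)) (Fin (N + 1)) ℝ)
    (ha : H 0 0 ≠ 0)
    (hb : ∀ i : Fin N, H i.succ i.castSucc ≠ 0)
    (hc : ∀ c : Fin (N + 1), c ≠ 0 → ∃ a : Fin (N + 1), a ≤ c ∧ H a c ≠ 0) :
    ∀ s : Finset (Fin (N + 1)), s.Nonempty →
      ∃ t : Finset (Fin (N + 1)), s.card ≤ t.card ∧ ∀ j ∈ t, ∃ i ∈ s, H i j ≠ 0 := by
  intro s hs
  have hf : Function.Injective (fun i : Fin (N+1) => i - 1) := sub_left_injective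
  have hsub : ∀ i : Fin (N+1), i ≠ 0 → H i (i - 1) ≠ 0 := by
    intro i hi
    have : i = (i.pred hi).succ := (Fin.succ_pred i hi).symm
    rw [this, succ_sub_one']
    exact hb _
  by_cases h0 : (0 : Fin (N+1)) ∈ s
  · -- define c: max of consecutive prefix
    set T := Finset.univ.filter (fun c : Fin (N+1) => ∀ x ≤ c, x ∈ s) with hT
    have hTne : T.Nonempty := by
      refine ⟨0, ?_⟩
      simp only [hT, Finset.mem_filter, Finset.mem_univ, true_and]
      intro x hx
      rwa [Fin.le_zero_iff.mp hx]
    set c := T.max' hTne with hcdef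
    have hcT : c ∈ T := T.max'_mem hTne
    have hpre : ∀ x ≤ c, x ∈ s := by
      have := Finset.mem_filter.mp hcT
      exact this.2
    have hnotsucc : ∀ i ∈ s, i ≠ 0 → i - 1 ≠ c := by
      intro i hi hi0 heq
      have hic : i = c + 1 := by
        rwa [sub_eq_iff_eq_add] at heq
      by_cases hlast : c = Fin.last N
      · apply hi0
        rw [hic, hlast, Fin.last_add_one]
      · -- c + 1 ∈ T, contradicting maximality
        have hclt : c < Fin.last N := lt_of_le_of_ne (Fin.le_last c) hlast
        have hval : ((c + 1 : Fin (N+1)) : ℕ) = (c : ℕ) + 1 := Fin.val_add_one_of_lt hclt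
        have hmem : c + 1 ∈ T := by
          simp only [hT, Finset.mem_filter, Finset.mem_univ, true_and]
          intro x hx
          rcases eq_or_lt_of_le hx with h | h
          · rw [h, ← hic]; exact hi
          · apply hpre
            have : (x : ℕ) < (c : ℕ) + 1 := by
              have := (Fin.lt_iff_val_lt_val.mp h); omega
            exact Fin.le_def.mpr (by omega)
        have := T.le_max' _ hmem
        have : ((c + 1 : Fin (N+1)) : ℕ) ≤ (c : ℕ) := Fin.le_def.mp this
        omega
    refine ⟨insert c ((s.erase 0).image (fun i => i - 1)), ?_, ?_⟩
    · have hnot : c ∉ (s.erase 0).image (fun i => i - 1) := by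
        intro hmem
        obtain ⟨i, hi, heq⟩ := Finset.mem_image.mp hmem
        exact hnotsucc i (Finset.mem_of_mem_erase hi) (Finset.ne_of_mem_erase hi) heq
      rw [Finset.card_insert_of_notMem hnot,
        Finset.card_image_of_injective _ hf, Finset.card_erase_of_mem h0]
      have : 1 ≤ s.card := Finset.card_pos.mpr hs
      omega
    · intro j hj
      rcases Finset.mem_insert.mp hj with rfl | hj
      · by_cases hc0 : c = 0
        · exact ⟨0, h0, by rwa [hc0]⟩
        · obtain ⟨a, hac, hane⟩ := hc c hc0
          exact ⟨a, hpre a hac, hane⟩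
      · obtain ⟨i, hi, rfl⟩ := Finset.mem_image.mp hj
        exact ⟨i, Finset.mem_of_mem_erase hi, hsub i (Finset.ne_of_mem_erase hi)⟩
  · refine ⟨s.image (fun i => i - 1), ?_, ?_⟩
    · rw [Finset.card_image_of_injective _ hf]
    · intro j hj
      obtain ⟨i, hi, rfl⟩ := Finset.mem_image.mp hj
      exact ⟨i, hi, hsub i (fun h => h0 (h ▸ hi))⟩
end

section
/- Let G be connected with weighted Laplacian B, let M ⊆ N be a nonempty set of measured buses, and let U ⊆ N be the set of unalterable buses. Suppose S ⊆ M^c is nonempty and vulnerable, i.e., |U^c ∩ N[S]| ≥ |N(S)| + 1 (equivalently, N(S) is a vulnerable vertex cut of the augmented graph G^M). Then, for every choice of positive edge weights, there exists an unobservable attack ΔP (ΔP ≠ 0, ΔP = B·Δθ for some Δθ with Δθ_M = 0) with ΔP_i = 0 for all i ∈ U and ‖ΔP‖₀ ≤ |N(S)| + 1. -/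
open Matrix

lemma incVec_dot {n : ℕ} (i j : Fin n) (θ : Fin n → ℝ) (h : i ≠ j) :
    incVec i j ⬝ᵥ θ = θ i - θ j := by
  have : ∀ a : Fin n, incVec i j a * θ a
      = (if a = i then θ a else 0) + (if a = j then -θ a else 0) := by
    intro a
    simp only [incVec]
    split_ifs with h1 h2 <;> simp_all <;> ring
  simp only [dotProduct, this, Finset.sum_add_distrib, Finset.sum_ite_eq',
    Finset.mem_univ, if_true]
  ring

lemma edgeOuter_mulVec {n : ℕ} (i j : Fin n) (θ : Fin n → ℝ) (h : i ≠ j) (a : Fin n) :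
    (edgeOuter s(i, j)).mulVec θ a = incVec i j a * (θ i - θ j) := by
  simp only [edgeOuter, Sym2.lift_mk, mulVec, vecMulVec_apply, dotProduct,
    mul_assoc, ← Finset.mul_sum]
  congr 1
  simpa [dotProduct] using incVec_dot i j θ h

lemma lap_mulVec {n : ℕ} (G : SimpleGraph (Fin n)) [DecidableRel G.Adj]
    (w : Sym2 (Fin n) → ℝ) (θ : Fin n → ℝ) (a : Fin n) :
    (lap G w).mulVec θ a
      = ∑ e ∈ G.edgeFinset, w e * (edgeOuter e).mulVec θ a := by
  simp only [lap, mulVec, dotProduct, Matrix.sum_apply, Matrix.smul_apply,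
    Finset.sum_mul, smul_eq_mul]
  rw [Finset.sum_comm]
  refine Finset.sum_congr rfl fun e _ => ?_
  rw [Finset.mul_sum]
  exact Finset.sum_congr rfl fun x _ => by ring

lemma walk_const {n : ℕ} {G : SimpleGraph (Fin n)} {θ : Fin n → ℝ}
    (h : ∀ a b, G.Adj a b → θ a = θ b) {u v : Fin n} (p : G.Walk u v) : θ u = θ v := by
  induction p with
  | nil => rfl
  | cons hadj _ ih => exact (h _ _ hadj).trans ih

noncomputable def sqDiff {n : ℕ} (θ : Fin n → ℝ) : Sym2 (Fin n) → ℝ :=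
  Sym2.lift ⟨fun i j => (θ i - θ j) ^ 2, fun i j => by ring⟩

lemma quad_form {n : ℕ} (G : SimpleGraph (Fin n)) [DecidableRel G.Adj]
    (w : Sym2 (Fin n) → ℝ) (θ : Fin n → ℝ) :
    θ ⬝ᵥ (lap G w).mulVec θ = ∑ e ∈ G.edgeFinset, w e * sqDiff θ e := by
  simp only [dotProduct, lap_mulVec, Finset.mul_sum]
  rw [Finset.sum_comm]
  refine Finset.sum_congr rfl fun e he => ?_
  induction e using Sym2.ind with
  | _ i j =>
    have hadj : G.Adj i j := by rwa [← SimpleGraph.mem_edgeSet, ← SimpleGraph.mem_edgeFinset]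
    have hne : i ≠ j := hadj.ne
    have h1 : ∀ a, θ a * (w s(i, j) * (edgeOuter s(i, j)).mulVec θ a)
        = w s(i, j) * (θ a * incVec i j a * (θ i - θ j)) := by
      intro a
      rw [edgeOuter_mulVec i j θ hne]
      ring
    simp only [h1, ← Finset.mul_sum]
    congr 1
    have h2 : ∑ a, θ a * incVec i j a * (θ i - θ j)
        = (∑ a, incVec i j a * θ a) * (θ i - θ j) := by
      rw [Finset.sum_mul]
      exact Finset.sum_congr rfl fun a _ => by ring
    rw [h2]
    have := incVec_dot i j θ hne
    simp only [dotProduct] at this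
    rw [this, sqDiff, Sym2.lift_mk]
    ring

lemma lap_ker_adj {n : ℕ} (G : SimpleGraph (Fin n)) [DecidableRel G.Adj]
    (w : Sym2 (Fin n) → ℝ) (hw : ∀ e ∈ G.edgeSet, 0 < w e) (θ : Fin n → ℝ)
    (h : (lap G w).mulVec θ = 0) : ∀ a b, G.Adj a b → θ a = θ b := by
  have hq : ∑ e ∈ G.edgeFinset, w e * sqDiff θ e = 0 := by
    rw [← quad_form, h]
    simp
  have hnn : ∀ e ∈ G.edgeFinset, 0 ≤ w e * sqDiff θ e := by
    intro e he
    rw [SimpleGraph.mem_edgeFinset] at he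
    refine mul_nonneg (hw e he).le ?_
    induction e using Sym2.ind with
    | _ i j => rw [sqDiff, Sym2.lift_mk]; positivity
  have hz := (Finset.sum_eq_zero_iff_of_nonneg hnn).mp hq
  intro a b hab
  have hmem : s(a, b) ∈ G.edgeFinset := by
    rw [SimpleGraph.mem_edgeFinset]; exact hab
  have := hz _ hmem
  rw [sqDiff, Sym2.lift_mk] at this
  have hwpos := hw _ (SimpleGraph.mem_edgeFinset.mp hmem)
  have : (θ a - θ b) ^ 2 = 0 := by
    rcases mul_eq_zero.mp this with h' | h'
    · exact absurd h' hwpos.ne'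
    · exact h'
  have := pow_eq_zero_iff (n := 2) (by norm_num) |>.mp this
  linarith

lemma lap_mulVec_vanish {n : ℕ} (G : SimpleGraph (Fin n)) [DecidableRel G.Adj]
    (w : Sym2 (Fin n) → ℝ) (S : Finset (Fin n)) (θ : Fin n → ℝ)
    (hsupp : ∀ j, j ∉ S → θ j = 0) {i : Fin n} (hi : i ∉ closedNbhd G S) :
    (lap G w).mulVec θ i = 0 := by
  have hiS : i ∉ S := fun h => hi (Finset.mem_union_left _ h)
  have hiN : ∀ b, G.Adj i b → θ b = 0 := by
    intro b hadj
    by_contra hb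
    have hbS : b ∈ S := by
      by_contra hbS
      exact hb (hsupp b hbS)
    exact hi (Finset.mem_union_right _ (Finset.mem_filter.mpr
      ⟨Finset.mem_univ _, hiS, b, hbS, hadj⟩))
  rw [lap_mulVec]
  refine Finset.sum_eq_zero fun e he => ?_
  induction e using Sym2.ind with
  | _ a b =>
    have hadj : G.Adj a b := by rwa [← SimpleGraph.mem_edgeSet, ← SimpleGraph.mem_edgeFinset]
    rw [edgeOuter_mulVec a b θ hadj.ne]
    rcases eq_or_ne i a with rfl | hia
    · rw [hsupp i hiS, hiN b hadj]
      ring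
    rcases eq_or_ne i b with rfl | hib
    · rw [hsupp i hiS, hiN a hadj.symm]
      ring
    · simp [incVec, hia, hib]

/-- Extension-by-zero from `S` to `Fin n`, as a linear map. -/
def extZero {n : ℕ} (S : Finset (Fin n)) : (↥S → ℝ) →ₗ[ℝ] (Fin n → ℝ) where
  toFun x i := if h : i ∈ S then x ⟨i, h⟩ else 0
  map_add' x y := by ext i; by_cases h : i ∈ S <;> simp [h]
  map_smul' c x := by ext i; by_cases h : i ∈ S <;> simp [h]

/-- If `S ⊆ Mᶜ` is nonempty and vulnerable
(`|Uᶜ ∩ N[S]| ≥ |N(S)| + 1`), then for every choice of positive edge weights there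
is an unobservable attack `ΔP` vanishing on the unalterable buses `U` with
`‖ΔP‖₀ ≤ |N(S)| + 1`. -/
theorem sparse_unobservable_attack_of_vulnerable {n : ℕ} (hn : 2 ≤ n)
    (G : SimpleGraph (Fin n)) [DecidableRel G.Adj] (hG : G.Connected)
    (w : Sym2 (Fin n) → ℝ) (hw : ∀ e ∈ G.edgeSet, 0 < w e)
    (M U S : Finset (Fin n)) (hM : M.Nonempty)
    (hS : VulnerableSet G M U S) :
    ∃ ΔP : Fin n → ℝ, Unobservable (lap G w) M ΔP ∧ (∀ i ∈ U, ΔP i = 0) ∧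
      sparsity ΔP ≤ (nbhd G S).card + 1 := by
  obtain ⟨hSne, hSM, hcard⟩ := hS
  obtain ⟨T, hTsub, hTcard⟩ := Finset.exists_subset_card_eq hcard
  have hTU : T ⊆ Uᶜ := hTsub.trans (Finset.inter_subset_left)
  have hTclosed : T ⊆ closedNbhd G S := hTsub.trans (Finset.inter_subset_right)
  set C : Finset (Fin n) := closedNbhd G S \ T with hC
  have hdisj : Disjoint S (nbhd G S) := by
    rw [Finset.disjoint_left]
    intro a haS haN
    exact ((Finset.mem_filter.mp haN).2.1) haS
  have hclcard : (closedNbhd G S).card = S.card + (nbhd G S).card :=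
    Finset.card_union_of_disjoint hdisj
  have hCcard : C.card = S.card - 1 := by
    rw [hC, Finset.card_sdiff_of_subset hTclosed, hclcard, hTcard]
    omega
  have hSpos : 1 ≤ S.card := Finset.card_pos.mpr hSne
  have hClt : C.card < S.card := by omega
  -- the linear map from potentials on S to the constrained coordinates C
  set Φ : (↥S → ℝ) →ₗ[ℝ] (↥C → ℝ) :=
    (LinearMap.funLeft ℝ ℝ (fun c : ↥C => (c : Fin n))) ∘ₗ
      (lap G w).mulVecLin ∘ₗ extZero S with hΦ
  have hnotinj : ¬ Function.Injective Φ := by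
    intro hinj
    have := LinearMap.finrank_le_finrank_of_injective hinj
    rw [Module.finrank_pi, Module.finrank_pi, Fintype.card_coe, Fintype.card_coe] at this
    omega
  have hker : LinearMap.ker Φ ≠ ⊥ := fun h => hnotinj (LinearMap.ker_eq_bot.mp h)
  obtain ⟨x, hxker, hxne⟩ := (Submodule.ne_bot_iff _).mp hker
  set θ : Fin n → ℝ := extZero S x with hθ
  set ΔP : Fin n → ℝ := (lap G w).mulVec θ with hΔP
  have hθ0 : ∀ j, j ∉ S → θ j = 0 := fun j hj => dif_neg hj
  -- ΔP vanishes outside T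
  have hsupp : ∀ i, i ∉ T → ΔP i = 0 := by
    intro i hiT
    by_cases hicl : i ∈ closedNbhd G S
    · have hiC : i ∈ C := Finset.mem_sdiff.mpr ⟨hicl, hiT⟩
      have := congrFun (LinearMap.mem_ker.mp hxker) ⟨i, hiC⟩
      simpa [hΦ, LinearMap.funLeft, Matrix.mulVecLin] using this
    · exact lap_mulVec_vanish G w S θ hθ0 hicl
  -- ΔP is nonzero
  have hΔPne : ΔP ≠ 0 := by
    intro h0
    have hconst := lap_ker_adj G w hw θ (by rw [← hΔP]; exact h0)
    obtain ⟨m, hm⟩ := hM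
    have hθm : θ m = 0 := hθ0 m (fun hmS => (Finset.mem_compl.mp (hSM hmS)) hm)
    have hzero : ∀ a, θ a = 0 := by
      intro a
      have : θ a = θ m := ((hG a m).elim fun p => walk_const hconst p)
      rw [this, hθm]
    apply hxne
    ext s
    have := hzero s
    rw [hθ] at this
    simpa [extZero, s.2] using this
  refine ⟨ΔP, ⟨hΔPne, θ, rfl, fun i hi => hθ0 i
    (fun hiS => (Finset.mem_compl.mp (hSM hiS)) hi)⟩, ?_, ?_⟩
  · intro i hiU
    exact hsupp i (fun hiT => (Finset.mem_compl.mp (hTU hiT)) hiU)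
  · have hsub : Function.support ΔP ⊆ ↑T := by
      intro i hi
      by_contra hiT
      exact hi (hsupp i hiT)
    calc sparsity ΔP ≤ (↑T : Set (Fin n)).ncard :=
          Set.ncard_le_ncard hsub (T.finite_toSet)
      _ = T.card := Set.ncard_coe_finset T
      _ = (nbhd G S).card + 1 := hTcard
end

section
/- Let G be connected, M ⊆ N nonempty, and U ⊆ N. If there exists a vulnerable set, i.e., a nonempty S ⊆ M^c with |U^c ∩ N[S]| ≥ |N(S)| + 1, then the vulnerable vertex connectivity satisfies κ̄ ≤ |M|; that is, there exists a nonempty vulnerable S' ⊆ M^c with |N(S')| ≤ |M|. -/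
open Matrix

/-- If some vulnerable set exists, then the vulnerable vertex
connectivity is at most `|M|`: there is a nonempty vulnerable `S' ⊆ Mᶜ` with
`|N(S')| ≤ |M|`. -/
theorem vulnerable_connectivity_le_card_measured {n : ℕ} (hn : 2 ≤ n)
    (G : SimpleGraph (Fin n)) [DecidableRel G.Adj] (hG : G.Connected)
    (M U : Finset (Fin n)) (hM : M.Nonempty)
    (hex : ∃ S : Finset (Fin n), VulnerableSet G M U S) :
    ∃ S' : Finset (Fin n), VulnerableSet G M U S' ∧ (nbhd G S').card ≤ M.card := by
  classical
  obtain ⟨S, hSne, hSM, hScard⟩ := hex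
  by_cases h : (nbhd G S).card ≤ M.card
  · exact ⟨S, ⟨hSne, hSM, hScard⟩, h⟩
  · push_neg at h
    set R : Fin n → Fin n → Prop := fun a b => G.Adj a b ∧ b ∉ M with hR
    set S' : Finset (Fin n) := Finset.univ.filter
      (fun v => ∃ s ∈ S, Relation.ReflTransGen R s v) with hS'
    have hmemS' : ∀ v, v ∈ S' ↔ ∃ s ∈ S, Relation.ReflTransGen R s v := by
      intro v; simp [hS']
    have hSsub : S ⊆ S' := fun s hs => (hmemS' s).2 ⟨s, hs, Relation.ReflTransGen.refl⟩
    have hS'M : ∀ v ∈ S', v ∉ M := by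
      intro v hv
      obtain ⟨s, hs, hreach⟩ := (hmemS' v).1 hv
      rcases Relation.ReflTransGen.cases_tail hreach with rfl | ⟨c, _, hc⟩
      · exact fun hm => (Finset.mem_compl.1 (hSM hs)) hm
      · exact hc.2
    have hclosed : ∀ i ∈ S', ∀ j, G.Adj i j → j ∉ M → j ∈ S' := by
      intro i hi j hadj hjM
      obtain ⟨s, hs, hreach⟩ := (hmemS' i).1 hi
      exact (hmemS' j).2 ⟨s, hs, hreach.tail ⟨hadj, hjM⟩⟩
    have hnbhd_sub : nbhd G S' ⊆ M := by
      intro j hj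
      simp only [nbhd, Finset.mem_filter] at hj
      obtain ⟨-, hjS', i, hiS', hadj⟩ := hj
      by_contra hjM
      exact hjS' (hclosed i hiS' j hadj.symm hjM)
    have hcard' : (nbhd G S').card ≤ M.card := Finset.card_le_card hnbhd_sub
    have hmono : closedNbhd G S ⊆ closedNbhd G S' := by
      intro x hx
      simp only [closedNbhd, Finset.mem_union, nbhd, Finset.mem_filter, Finset.mem_univ,
        true_and] at hx ⊢
      rcases hx with hx | ⟨hxS, i, hiS, hadj⟩
      · exact Or.inl (hSsub hx)
      · by_cases hxS' : x ∈ S'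
        · exact Or.inl hxS'
        · exact Or.inr ⟨hxS', i, hSsub hiS, hadj⟩
    refine ⟨S', ⟨hSne.mono hSsub, fun v hv => Finset.mem_compl.2 (hS'M v hv), ?_⟩, hcard'⟩
    calc (nbhd G S').card + 1 ≤ (nbhd G S).card + 1 := by omega
      _ ≤ (Uᶜ ∩ closedNbhd G S).card := hScard
      _ ≤ (Uᶜ ∩ closedNbhd G S').card :=
          Finset.card_le_card (Finset.inter_subset_inter_left hmono)
end
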